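/- arXiv:2310.06971 — 6 statements merged into one kernel-verified Lean document; each statement's English description precedes it below -/
import Mathlib

section
/- Let (α, β) be a Galois-stable hypergeometric datum: α and β are finite tuples of rational numbers in [0,1), of the same length r ≥ 1, with no common entry, such that within each tuple any two reduced fractions with the same denominator occur with the same multiplicity. Let γ_0 < γ_1 < ⋯ < γ_s enumerate the distinct elements of α ∪ β ∪ {0,1}, let d be the maximum of the reduced denominators of these elements, and let p be a prime with p > d(d−1). For each j set m_j = ⌊γ_j (p−1)⌋ and γ_{j,c} = γ_j (p−1) − m_j, and for rationals x, y set ι(x,y) = 1 if x ≤ y and ι(x,y) = 0 if x > y, h(γ, γ_j) = γ − γ_j + ι(γ, γ_j) − γ_{j,c}, and ε(γ, γ_j) = 1 if γ = γ_j and 0 otherwise. Suppose 0 ≤ i ≤ s−1, m is an integer with m_i ≤ m < m_{i+1}, γ ∈ α ∪ β, and p divides the numerator of the fractional part of γ + m/(1−p) (a rational whose reduced denominator is prime to p). Then either m = m_i and h(γ, γ_i) = ε(γ, γ_i), or m = m_{i+1} − 1 and h(γ, γ_{i+1}) = ε(γ, γ_{i+1}) + 1. -/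
lemma aux_mul_den (x : ℚ) : x * (x.den : ℚ) = (x.num : ℚ) := by
  have h : (x.den : ℚ) ≠ 0 := by exact_mod_cast x.den_nz
  exact ((div_eq_iff h).mp (Rat.num_div_den x)).symm

lemma aux_gap {d : ℕ} (hd2 : 2 ≤ d) (x y : ℚ) (hx : x.den ≤ d) (hy : y.den ≤ d)
    (hxy : x < y) : 1 ≤ (y - x) * ((d * (d - 1) : ℕ) : ℚ) := by
  have hxm := aux_mul_den x
  have hym := aux_mul_den y
  have hxdpos : (0:ℚ) < (x.den : ℚ) := by exact_mod_cast x.pos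
  have hydpos : (0:ℚ) < (y.den : ℚ) := by exact_mod_cast y.pos
  have hpos : (0:ℚ) < y - x := sub_pos.2 hxy
  rcases eq_or_ne x.den y.den with he | hne
  · have hcast : ((x.den : ℚ)) = (y.den : ℚ) := by rw [he]
    have hz : (y - x) * (x.den : ℚ) = ((y.num - x.num : ℤ) : ℚ) := by
      push_cast
      linear_combination (y * hcast) + hym - hxm
    have hz1 : (1:ℤ) ≤ y.num - x.num := by
      have h0 : (0:ℚ) < ((y.num - x.num : ℤ) : ℚ) := by
        rw [← hz]; exact mul_pos hpos hxdpos
      exact_mod_cast h0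
    have hD : (x.den : ℚ) ≤ ((d * (d - 1) : ℕ) : ℚ) := by
      have : x.den ≤ d * (d - 1) := le_trans hx (by
        calc d = d * 1 := (Nat.mul_one d).symm
          _ ≤ d * (d - 1) := Nat.mul_le_mul_left d (by omega))
      exact_mod_cast this
    calc (1:ℚ) ≤ (y - x) * (x.den : ℚ) := by rw [hz]; exact_mod_cast hz1
      _ ≤ (y - x) * ((d * (d - 1) : ℕ) : ℚ) := by
          exact mul_le_mul_of_nonneg_left hD hpos.le
  · have hz : (y - x) * ((x.den : ℚ) * (y.den : ℚ))
        = ((y.num * x.den - x.num * y.den : ℤ) : ℚ) := by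
      push_cast
      linear_combination ((x.den : ℚ)) * hym - ((y.den : ℚ)) * hxm
    have hz1 : (1:ℤ) ≤ y.num * x.den - x.num * y.den := by
      have h0 : (0:ℚ) < ((y.num * x.den - x.num * y.den : ℤ) : ℚ) := by
        rw [← hz]; exact mul_pos hpos (mul_pos hxdpos hydpos)
      exact_mod_cast h0
    have hD : ((x.den : ℚ)) * (y.den : ℚ) ≤ ((d * (d - 1) : ℕ) : ℚ) := by
      have : x.den * y.den ≤ d * (d - 1) := by
        rcases Nat.lt_or_ge x.den y.den with h | h
        · calc x.den * y.den ≤ (d-1) * d := Nat.mul_le_mul (by omega) hy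
            _ = d * (d-1) := Nat.mul_comm _ _
        · have h' : y.den < x.den := lt_of_le_of_ne h (Ne.symm hne)
          exact Nat.mul_le_mul hx (by omega)
      exact_mod_cast this
    calc (1:ℚ) ≤ (y - x) * ((x.den : ℚ) * (y.den : ℚ)) := by rw [hz]; exact_mod_cast hz1
      _ ≤ (y - x) * ((d * (d - 1) : ℕ) : ℚ) := mul_le_mul_of_nonneg_left hD hpos.le

set_option maxHeartbeats 2000000 in
/-- Let `(α, β)` be a Galois-stable hypergeometric datum of length `r ≥ 1` with no
common entry, let `γ 0 < γ 1 < ⋯ < γ s` enumerate the distinct elements of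
`α ∪ β ∪ {0,1}`, let `d` be the maximum of the reduced denominators of these
elements, and let `p > d(d−1)` be prime. Set `mf j = ⌊γ j · (p−1)⌋`,
`γc j = γ j · (p−1) − mf j`, `ι x y = 1` if `x ≤ y` else `0`,
`hfun g j = g − γ j + ι g (γ j) − γc j`, and `εfun g j = 1` if `g = γ j` else `0`.
Suppose `0 ≤ i ≤ s−1`, `mf i ≤ m < mf (i+1)`, `g ∈ α ∪ β`, and `p` divides the
numerator of the fractional part of `g + m/(1−p)`. Then either `m = mf i` and
`hfun g i = εfun g i`, or `m = mf (i+1) − 1` and `hfun g (i+1) = εfun g (i+1) + 1`. -/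
theorem stmt_0 (r : ℕ) (hr : 1 ≤ r) (α β : Fin r → ℚ)
    (hα01 : ∀ j, 0 ≤ α j ∧ α j < 1) (hβ01 : ∀ j, 0 ≤ β j ∧ β j < 1)
    (hdisj : ∀ j k, α j ≠ β k)
    (hαgal : ∀ x y : ℚ, 0 ≤ x → x < 1 → 0 ≤ y → y < 1 → x.den = y.den →
      (Finset.univ.filter fun j => α j = x).card =
        (Finset.univ.filter fun j => α j = y).card)
    (hβgal : ∀ x y : ℚ, 0 ≤ x → x < 1 → 0 ≤ y → y < 1 → x.den = y.den →
      (Finset.univ.filter fun j => β j = x).card =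
        (Finset.univ.filter fun j => β j = y).card)
    (s : ℕ) (γ : ℕ → ℚ)
    (hγmono : ∀ j k, j < k → k ≤ s → γ j < γ k)
    (hγrange : Set.range α ∪ Set.range β ∪ {0, 1} = γ '' Set.Iic s)
    (d : ℕ) (hd : d = (Finset.range (s + 1)).sup fun j => (γ j).den)
    (p : ℕ) (hp : p.Prime) (hpd : d * (d - 1) < p)
    (mf : ℕ → ℤ) (hmf : ∀ j, mf j = ⌊γ j * ((p : ℚ) - 1)⌋)
    (γc : ℕ → ℚ) (hγc : ∀ j, γc j = γ j * ((p : ℚ) - 1) - mf j)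
    (ι : ℚ → ℚ → ℚ) (hι : ∀ x y, ι x y = if x ≤ y then 1 else 0)
    (hfun : ℚ → ℕ → ℚ) (hh : ∀ g j, hfun g j = g - γ j + ι g (γ j) - γc j)
    (εfun : ℚ → ℕ → ℚ) (hε : ∀ g j, εfun g j = if g = γ j then 1 else 0)
    (i : ℕ) (hi : i < s)
    (m : ℤ) (hm1 : mf i ≤ m) (hm2 : m < mf (i + 1))
    (g : ℚ) (hg : g ∈ Set.range α ∪ Set.range β)
    (hdvd : (p : ℤ) ∣ (Int.fract (g + (m : ℚ) / (1 - (p : ℚ)))).num) :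
    (m = mf i ∧ hfun g i = εfun g i) ∨
      (m = mf (i + 1) - 1 ∧ hfun g (i + 1) = εfun g (i + 1) + 1) := by
  classical
  -- Basic facts about the enumeration
  have hge : ∀ x ∈ Set.range α ∪ Set.range β ∪ ({0,1} : Set ℚ),
      ∃ j, j ≤ s ∧ γ j = x := by
    intro x hx
    rw [hγrange] at hx
    obtain ⟨j, hj, rfl⟩ := hx
    exact ⟨j, hj, rfl⟩
  have hmem : ∀ j, j ≤ s → γ j ∈ Set.range α ∪ Set.range β ∪ ({0,1} : Set ℚ) := by
    intro j hj; rw [hγrange]; exact ⟨j, hj, rfl⟩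
  have hbound : ∀ x ∈ Set.range α ∪ Set.range β ∪ ({0,1} : Set ℚ), 0 ≤ x ∧ x ≤ 1 := by
    rintro x (hx | hx)
    · rcases hx with ⟨j, rfl⟩ | ⟨j, rfl⟩
      · exact ⟨(hα01 j).1, (hα01 j).2.le⟩
      · exact ⟨(hβ01 j).1, (hβ01 j).2.le⟩
    · rcases hx with rfl | rfl
      · norm_num
      · norm_num
  have hγ01 : ∀ j, j ≤ s → 0 ≤ γ j ∧ γ j ≤ 1 := fun j hj => hbound _ (hmem j hj)
  have hden : ∀ j, j ≤ s → (γ j).den ≤ d := by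
    intro j hj; rw [hd]
    exact Finset.le_sup (f := fun j => (γ j).den) (Finset.mem_range.mpr (by omega))
  -- d ≥ 2
  have hzero_of : ∀ x : ℚ, 0 ≤ x → x < 1 → x.den = 1 → x = 0 := by
    intro x h0 h1 hden1
    have hx : ((x.num : ℚ)) = x := (Rat.den_eq_one_iff x).mp hden1
    have h0' : 0 ≤ x.num := Rat.num_nonneg.mpr h0
    have h1' : (x.num : ℚ) < 1 := by rw [hx]; exact h1
    have : x.num < 1 := by exact_mod_cast h1'
    have : x.num = 0 := by omega
    rw [← hx, this]; norm_num
  have hd2 : 2 ≤ d := by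
    by_contra hdlt
    push_neg at hdlt
    have hden1 : ∀ x ∈ Set.range α ∪ Set.range β, x = 0 := by
      intro x hx
      obtain ⟨j, hjs, hjx⟩ := hge x (Or.inl hx)
      have hxd : x.den ≤ d := hjx ▸ hden j hjs
      have hxd1 : x.den = 1 := by have := x.pos; omega
      obtain ⟨h0, h1⟩ := hbound x (Or.inl hx)
      rcases hx with ⟨jj, rfl⟩ | ⟨jj, rfl⟩
      · exact hzero_of _ (hα01 jj).1 (hα01 jj).2 hxd1
      · exact hzero_of _ (hβ01 jj).1 (hβ01 jj).2 hxd1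
    have h1 : α ⟨0, by omega⟩ = 0 := hden1 _ (Or.inl ⟨_, rfl⟩)
    have h2 : β ⟨0, by omega⟩ = 0 := hden1 _ (Or.inr ⟨_, rfl⟩)
    exact hdisj ⟨0, by omega⟩ ⟨0, by omega⟩ (h1.trans h2.symm)
  have hp2 : 2 ≤ p := hp.two_le
  have hp3 : 3 ≤ p := by have := hpd; have : 2 * 1 ≤ d * (d-1) := Nat.mul_le_mul hd2 (by omega); omega
  have hpQ : (0:ℚ) < (p:ℚ) - 1 := by
    have : (2:ℚ) ≤ (p:ℚ) := by exact_mod_cast hp2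
    linarith
  -- spacing of the γ's
  have hspace : ∀ j k, j < k → k ≤ s → γ j * ((p:ℚ)-1) + 1 ≤ γ k * ((p:ℚ)-1) := by
    intro j k hjk hks
    have hgap := aux_gap hd2 (γ j) (γ k) (hden j (by omega)) (hden k hks)
      (hγmono j k hjk hks)
    have hND : ((d * (d-1) : ℕ) : ℚ) ≤ (p:ℚ) - 1 := by
      have h' : (d * (d-1) : ℕ) + 1 ≤ p := hpd
      have := (Nat.cast_le (α := ℚ)).mpr h'
      push_cast at this ⊢
      linarith
    have hpos : (0:ℚ) < γ k - γ j := sub_pos.2 (hγmono j k hjk hks)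
    nlinarith [mul_le_mul_of_nonneg_left hND hpos.le]
  have hmfmono : ∀ j k, j < k → k ≤ s → mf j + 1 ≤ mf k := by
    intro j k hjk hks
    rw [hmf j, hmf k]
    have h1 := hspace j k hjk hks
    have h2 := Int.floor_le (γ j * ((p:ℚ)-1))
    rw [Int.le_floor]
    push_cast
    linarith
  -- bounds on m
  have hm0 : 0 ≤ m := by
    refine le_trans ?_ hm1
    rw [hmf]
    rw [Int.le_floor]
    push_cast
    exact mul_nonneg (hγ01 i (by omega)).1 hpQ.le
  have hγs : γ s = 1 := by
    obtain ⟨j, hjs, hj1⟩ := hge 1 (Or.inr (by norm_num))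
    have h1 : γ j ≤ γ s := by
      rcases eq_or_lt_of_le hjs with rfl | h
      · exact le_refl _
      · exact (hγmono j s h (le_refl s)).le
    have h2 : γ s ≤ 1 := (hγ01 s (le_refl s)).2
    rw [hj1] at h1
    linarith
  have hmfs : mf s = (p:ℤ) - 1 := by
    rw [hmf, hγs, one_mul]
    rw [show ((p:ℚ) - 1) = (((p:ℤ) - 1 : ℤ) : ℚ) by push_cast; ring]
    exact Int.floor_intCast _
  have hmN : m + 1 ≤ (p:ℤ) - 1 := by
    have h1 : mf (i+1) ≤ mf s := by
      rcases eq_or_lt_of_le (show i + 1 ≤ s by omega) with he | h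
      · rw [he]
      · exact le_trans (by omega) (hmfmono (i+1) s h (le_refl s))
    omega
  -- the numerator setup
  obtain ⟨hg0, hg1⟩ : 0 ≤ g ∧ g < 1 := by
    rcases hg with ⟨j, rfl⟩ | ⟨j, rfl⟩
    · exact hα01 j
    · exact hβ01 j
  have hbd : g.den ≤ d := by
    obtain ⟨j, hjs, hjg⟩ := hge g (Or.inl hg)
    exact hjg ▸ hden j hjs
  set a : ℤ := g.num with ha
  set bz : ℤ := (g.den : ℤ) with hbz
  have hbz0 : 0 < bz := by rw [hbz]; exact_mod_cast g.pos
  have hbQ : (0:ℚ) < (bz:ℚ) := by exact_mod_cast hbz0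
  have ha0 : 0 ≤ a := Rat.num_nonneg.mpr hg0
  have hab : a < bz := by
    have h := hg1
    rw [← Rat.num_div_den g] at h
    have h2 := (div_lt_one (by exact_mod_cast g.pos : (0:ℚ) < (g.den:ℚ))).mp h
    rw [ha, hbz]; exact_mod_cast h2
  have hgab : g * ((bz:ℤ):ℚ) = ((a:ℤ):ℚ) := by
    rw [ha, hbz]; push_cast; exact aux_mul_den g
  clear_value a bz
  set qq : ℚ := g + (m : ℚ) / (1 - (p:ℚ)) with hqq
  have h1p : (1:ℚ) - (p:ℚ) < 0 := by linarith
  have h1p' : (1:ℚ) - (p:ℚ) ≠ 0 := ne_of_lt h1p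
  have hq1 : qq < 1 := by
    have hnp : (m:ℚ) / (1 - (p:ℚ)) ≤ 0 := by
      apply div_nonpos_of_nonneg_of_nonpos
      · exact_mod_cast hm0
      · exact h1p.le
    rw [hqq]; linarith
  have hqm1 : -1 < qq := by
    have hmlt : (m:ℚ) < (p:ℚ) - 1 := by
      exact_mod_cast (show m < (p:ℤ) - 1 by omega)
    have hrw : (m:ℚ) / (1 - (p:ℚ)) = -((m:ℚ) / ((p:ℚ) - 1)) := by
      rw [← div_neg]; ring_nf
    have h2 : (m:ℚ) / ((p:ℚ) - 1) < 1 := (div_lt_one hpQ).mpr hmlt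
    rw [hqq, hrw]; linarith
  set k : ℤ := ⌊qq⌋ with hkdef
  have hk1 : k < 1 := Int.floor_lt.mpr (by exact_mod_cast hq1)
  have hk2 : -1 ≤ k := Int.le_floor.mpr (by push_cast; linarith)
  have hfr : Int.fract qq = qq - (k:ℚ) := rfl
  clear_value qq k
  have hB0 : bz * ((p:ℤ)-1) ≠ 0 := by
    have h1 : (0:ℤ) < (p:ℤ) - 1 := by omega
    positivity
  have hBQ : ((bz * ((p:ℤ)-1) : ℤ):ℚ) ≠ 0 := by exact_mod_cast hB0
  have hfq : Int.fract qq =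
      ((a * ((p:ℤ)-1) - m * bz - k * bz * ((p:ℤ)-1) : ℤ):ℚ) / ((bz * ((p:ℤ)-1) : ℤ):ℚ) := by
    rw [hfr, eq_div_iff hBQ, hqq]
    push_cast
    field_simp
    linear_combination (((p:ℚ) - 1) - (p:ℚ)*((p:ℚ) - 1)) * hgab
  have hpX : (p:ℤ) ∣ a * ((p:ℤ)-1) - m * bz - k * bz * ((p:ℤ)-1) := by
    have hnd : (Int.fract qq).num ∣ a * ((p:ℤ)-1) - m * bz - k * bz * ((p:ℤ)-1) := by
      rw [hfq, ← Rat.divInt_eq_div]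
      exact Rat.num_dvd _ hB0
    exact dvd_trans hdvd hnd
  obtain ⟨t, ht⟩ := hpX
  -- the integer u with p * u = a + (m - k) * bz
  set M : ℤ := m - k with hMdef
  set u : ℤ := a - k * bz - t with hudef
  have hu : a + M * bz = (p:ℤ) * u := by
    rw [hudef, hMdef]
    linear_combination (-1 : ℤ) * ht
  clear_value M u
  have hpz0 : (0:ℤ) < (p:ℤ) := by positivity
  have hM0 : 0 ≤ M := by omega
  have hMN : M ≤ (p:ℤ) - 1 := by omega
  have hu0 : 0 ≤ u := by
    have h1 : (p:ℤ) * 0 ≤ (p:ℤ) * u := by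
      rw [← hu]
      have h2 : 0 ≤ M * bz := mul_nonneg hM0 hbz0.le
      omega
    exact le_of_mul_le_mul_left h1 hpz0
  have hub : u < bz := by
    have h1 : (p:ℤ) * u < (p:ℤ) * bz := by
      rw [← hu]
      have h2 : M * bz ≤ ((p:ℤ) - 1) * bz := mul_le_mul_of_nonneg_right hMN hbz0.le
      nlinarith
    exact lt_of_mul_lt_mul_left h1 hpz0.le
  -- u is coprime to the denominator
  have hgcd1 : Int.gcd u bz = 1 := by
    have h2 : (Int.gcd u bz : ℤ) ∣ u := Int.gcd_dvd_left u bz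
    have h3 : (Int.gcd u bz : ℤ) ∣ bz := Int.gcd_dvd_right u bz
    have hdvda : (Int.gcd u bz : ℤ) ∣ a := by
      have hae : a = (p:ℤ) * u - M * bz := by linarith [hu]
      rw [hae]
      exact dvd_sub (h2.mul_left _) (h3.mul_left _)
    have h4 : (Int.gcd u bz : ℤ) ∣ (Int.gcd a bz : ℤ) :=
      Int.dvd_coe_gcd hdvda h3
    have h5 : Int.gcd a bz = 1 := by
      have hred := g.reduced
      have : Int.gcd a bz = Nat.gcd a.natAbs bz.natAbs := rfl
      rw [this, ha, hbz, Int.natAbs_natCast]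
      exact hred
    rw [h5] at h4
    have h6 : Int.gcd u bz ∣ 1 := by exact_mod_cast h4
    exact Nat.dvd_one.mp h6
  have hcop : Nat.Coprime u.natAbs g.den := by
    have h7 : Int.gcd u bz = Nat.gcd u.natAbs g.den := by
      have : Int.gcd u bz = Nat.gcd u.natAbs bz.natAbs := rfl
      rw [this, hbz, Int.natAbs_natCast]
    rwa [h7] at hgcd1
  -- the rational g' = u / b
  set g' : ℚ := ((u:ℤ):ℚ) / ((bz:ℤ):ℚ) with hg'def
  have hcop' : Nat.Coprime u.natAbs bz.natAbs := by
    rw [hbz, Int.natAbs_natCast]; exact hcop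
  have hg'num : g'.num = u := Rat.num_div_eq_of_coprime hbz0 hcop'
  have hg'den : (g'.den : ℤ) = bz := Rat.den_div_eq_of_coprime hbz0 hcop'
  have hg'denN : g'.den = g.den := by
    rw [hbz] at hg'den; exact_mod_cast hg'den
  have hg'0 : 0 ≤ g' := div_nonneg (by exact_mod_cast hu0) hbQ.le
  have hg'1 : g' < 1 := by
    rw [hg'def]; exact (div_lt_one hbQ).mpr (by exact_mod_cast hub)
  clear_value g'
  -- Galois stability: g' is an element of the tuple containing g
  obtain ⟨F, hF01, hFgal, hFrange, jF, hjF⟩ :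
      ∃ F : Fin r → ℚ, (∀ j, 0 ≤ F j ∧ F j < 1) ∧
        (∀ x y : ℚ, 0 ≤ x → x < 1 → 0 ≤ y → y < 1 → x.den = y.den →
          (Finset.univ.filter fun j => F j = x).card =
            (Finset.univ.filter fun j => F j = y).card) ∧
        Set.range F ⊆ Set.range α ∪ Set.range β ∧ ∃ jF, F jF = g := by
    rcases hg with ⟨j, hj⟩ | ⟨j, hj⟩
    · exact ⟨α, hα01, hαgal, Set.subset_union_left, j, hj⟩
    · exact ⟨β, hβ01, hβgal, Set.subset_union_right, j, hj⟩
  have hcard := hFgal g' g hg'0 hg'1 hg0 hg1 (by rw [hg'denN])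
  have hposcard : 0 < (Finset.univ.filter fun j => F j = g).card :=
    Finset.card_pos.mpr ⟨jF, Finset.mem_filter.mpr ⟨Finset.mem_univ _, hjF⟩⟩
  rw [← hcard] at hposcard
  obtain ⟨j', hj'mem⟩ := Finset.card_pos.mp hposcard
  have hj' : F j' = g' := (Finset.mem_filter.mp hj'mem).2
  have hg'mem : g' ∈ Set.range α ∪ Set.range β := hFrange ⟨j', hj'⟩
  obtain ⟨j₀, hj₀s, hγj₀⟩ := hge g' (Or.inl hg'mem)
  -- the key inequalities  m * b ≤ u * (p-1) < (m+1) * b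
  have hqqid : qq * ((bz:ℚ) * ((p:ℚ)-1)) = (a:ℚ)*((p:ℚ)-1) - (m:ℚ)*(bz:ℚ) := by
    rw [hqq]
    field_simp
    linear_combination (((p:ℚ) - 1) - (p:ℚ)*((p:ℚ) - 1)) * hgab
  have hkcases : k = 0 ∨ k = -1 := by omega
  have hmbz0 : 0 ≤ m * bz := mul_nonneg hm0 hbz0.le
  obtain ⟨hA, hB, hsign⟩ : m * bz ≤ u * ((p:ℤ)-1) ∧ u * ((p:ℤ)-1) < (m+1) * bz ∧
      ((k = 0 ∧ u ≤ a) ∨ (k = -1 ∧ a < u)) := by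
    rcases hkcases with hk0 | hkm1
    · -- k = 0 : the fractional part case with q ≥ 0
      have hu' : a + m * bz = (p:ℤ) * u := by
        have hMm : M = m := by omega
        rwa [hMm] at hu
      have hq0 : (0:ℚ) ≤ qq := by
        have h2 := Int.floor_le qq
        rw [← hkdef, hk0] at h2
        simpa using h2
      have haN : m * bz ≤ a * ((p:ℤ)-1) := by
        have h2 : (0:ℚ) ≤ qq * ((bz:ℚ) * ((p:ℚ)-1)) :=
          mul_nonneg hq0 (le_of_lt (mul_pos hbQ hpQ))
        rw [hqqid] at h2
        have h3 : (m:ℚ)*(bz:ℚ) ≤ (a:ℚ)*((p:ℚ)-1) := by linarith only [h2]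
        exact_mod_cast h3
      refine ⟨?_, ?_, Or.inl ⟨hk0, ?_⟩⟩
      · -- m*bz ≤ u*(p-1)
        have key : (p:ℤ)*(u*((p:ℤ)-1) - m*bz) = a*((p:ℤ)-1) - m*bz := by
          linear_combination (-((p:ℤ)-1)) * hu'
        have h4 : (p:ℤ) * 0 ≤ (p:ℤ) * (u*((p:ℤ)-1) - m*bz) := by
          rw [mul_zero, key]; linarith only [haN]
        have h5 := le_of_mul_le_mul_left h4 hpz0
        linarith only [h5]
      · -- u*(p-1) < (m+1)*bz
        have key2 : (p:ℤ)*((m+1)*bz - u*((p:ℤ)-1)) = m*bz + (p:ℤ)*bz - a*((p:ℤ)-1) := by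
          linear_combination ((p:ℤ)-1) * hu'
        have h6 : a*((p:ℤ)-1) ≤ (bz-1)*((p:ℤ)-1) :=
          mul_le_mul_of_nonneg_right (by omega) (by omega)
        have h7 : (p:ℤ) * 0 < (p:ℤ) * ((m+1)*bz - u*((p:ℤ)-1)) := by
          rw [mul_zero, key2]; linarith only [h6, hmbz0, hbz0, hpz0]
        have h8 := lt_of_mul_lt_mul_left h7 hpz0.le
        linarith only [h8]
      · -- u ≤ a
        have h9 : (p:ℤ) * u ≤ (p:ℤ) * a := by linarith only [hu', haN]
        exact le_of_mul_le_mul_left h9 hpz0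
    · -- k = -1 : the fractional part case with q < 0
      have hu'' : a + (m+1) * bz = (p:ℤ) * u := by
        have hMm : M = m + 1 := by omega
        rwa [hMm] at hu
      have hqneg : qq < 0 := by
        have h2 := Int.lt_floor_add_one qq
        rw [← hkdef, hkm1] at h2
        push_cast at h2
        linarith only [h2]
      have haN' : a * ((p:ℤ)-1) < m * bz := by
        have h2 : qq * ((bz:ℚ) * ((p:ℚ)-1)) < 0 :=
          mul_neg_of_neg_of_pos hqneg (mul_pos hbQ hpQ)
        rw [hqqid] at h2
        have h3 : (a:ℚ)*((p:ℚ)-1) < (m:ℚ)*(bz:ℚ) := by linarith only [h2]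
        exact_mod_cast h3
      refine ⟨?_, ?_, Or.inr ⟨hkm1, ?_⟩⟩
      · have key : (p:ℤ)*(u*((p:ℤ)-1) - m*bz) = a*((p:ℤ)-1) - m*bz + bz*((p:ℤ)-1) := by
          linear_combination (-((p:ℤ)-1)) * hu''
        have h6 : m * bz ≤ ((p:ℤ)-1) * bz :=
          mul_le_mul_of_nonneg_right (by omega) hbz0.le
        have h4 : (p:ℤ) * 0 ≤ (p:ℤ) * (u*((p:ℤ)-1) - m*bz) := by
          rw [mul_zero, key]
          linarith only [h6, mul_nonneg ha0 (show (0:ℤ) ≤ (p:ℤ)-1 by omega)]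
        have h5 := le_of_mul_le_mul_left h4 hpz0
        linarith only [h5]
      · have key2 : (p:ℤ)*((m+1)*bz - u*((p:ℤ)-1)) = (m+1)*bz - a*((p:ℤ)-1) := by
          linear_combination ((p:ℤ)-1) * hu''
        have h7 : (p:ℤ) * 0 < (p:ℤ) * ((m+1)*bz - u*((p:ℤ)-1)) := by
          rw [mul_zero, key2]; linarith only [haN', hbz0]
        have h8 := lt_of_mul_lt_mul_left h7 hpz0.le
        linarith only [h8]
      · -- a < u
        have h9 : (p:ℤ) * a < (p:ℤ) * u := by linarith only [hu'', haN', hbz0]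
        exact lt_of_mul_lt_mul_left h9 hpz0.le
  -- floor of g' * (p-1) is m
  have hval : g' * ((p:ℚ)-1) = ((u * ((p:ℤ)-1) : ℤ):ℚ) / ((bz:ℤ):ℚ) := by
    rw [hg'def]; push_cast; ring
  have hflo : ⌊g' * ((p:ℚ)-1)⌋ = m := by
    rw [Int.floor_eq_iff, hval]
    constructor
    · rw [le_div_iff₀ hbQ]
      exact_mod_cast hA
    · rw [div_lt_iff₀ hbQ]
      push_cast
      exact_mod_cast hB
  have hmfj₀ : mf j₀ = m := by
    rw [hmf, hγj₀]
    exact hflo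
  have hj₀i : j₀ = i := by
    rcases Nat.lt_trichotomy j₀ i with h | h | h
    · have := hmfmono j₀ i h (by omega); omega
    · exact h
    · exfalso
      have h3 : i + 1 ≤ j₀ := h
      rcases eq_or_lt_of_le h3 with he | hlt
      · rw [← he] at hmfj₀; omega
      · have := hmfmono (i+1) j₀ hlt hj₀s; omega
  -- conclusion: the first alternative holds
  left
  have hγi : γ i = g' := by rw [← hj₀i]; exact hγj₀
  have hmfi : m = mf i := by rw [← hj₀i]; omega
  refine ⟨hmfi, ?_⟩
  have hgeq : g = ((a:ℤ):ℚ)/((bz:ℤ):ℚ) := by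
    rw [eq_div_iff (ne_of_gt hbQ)]; exact hgab
  rw [hh, hι, hε, hγc, hmf, hγi, hflo]
  rcases hsign with ⟨hk0, hua⟩ | ⟨hkm1, hau⟩
  · have hu' : a + m * bz = (p:ℤ) * u := by
      have hMm : M = m := by omega
      rwa [hMm] at hu
    have hu'Q : (a:ℚ) + (m:ℚ) * (bz:ℚ) = (p:ℚ) * (u:ℚ) := by exact_mod_cast hu'
    rcases eq_or_lt_of_le hua with he | hlt
    · -- u = a : g = g'
      have hgg' : g = g' := by rw [hgeq, hg'def, he]
      have hueq : u * ((p:ℤ)-1) = m * bz := by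
        rw [he] at hu' ⊢
        linear_combination (-1 : ℤ) * hu'
      have hueqQ : ((u * ((p:ℤ)-1) : ℤ):ℚ) = (m:ℚ) * (bz:ℚ) := by exact_mod_cast hueq
      rw [if_pos hgg'.le, if_pos hgg', hgg', hval, hueqQ]
      field_simp
      ring
    · have hgg' : g' < g := by
        rw [hgeq, hg'def]
        exact (div_lt_div_iff_of_pos_right hbQ).mpr (by exact_mod_cast hlt)
      rw [if_neg (not_le.mpr hgg'), if_neg (ne_of_gt hgg')]
      rw [hval, hgeq, hg'def]
      field_simp
      push_cast
      linear_combination hu'Q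
  · have hu'' : a + (m+1) * bz = (p:ℤ) * u := by
      have hMm : M = m + 1 := by omega
      rwa [hMm] at hu
    have hu''Q : (a:ℚ) + ((m:ℚ)+1) * (bz:ℚ) = (p:ℚ) * (u:ℚ) := by exact_mod_cast hu''
    have hgg' : g < g' := by
      rw [hgeq, hg'def]
      exact (div_lt_div_iff_of_pos_right hbQ).mpr (by exact_mod_cast hau)
    rw [if_pos hgg'.le, if_neg (ne_of_lt hgg')]
    rw [hval, hgeq, hg'def]
    field_simp
    push_cast
    linear_combination hu''Q
end

section
/- Let d be a positive integer and let γ, γ' be rational numbers with 0 ≤ γ < γ' ≤ 1 whose reduced denominators are both at most d. Then for every positive integer n with n ≥ d(d−1), one has ⌊γ n⌋ < ⌊γ' n⌋. -/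
/-- Let `d` be a positive integer and let `γ, γ'` be rational numbers with
`0 ≤ γ < γ' ≤ 1` whose reduced denominators are both at most `d`. Then for every
positive integer `n` with `n ≥ d(d−1)`, one has `⌊γ n⌋ < ⌊γ' n⌋`. -/
theorem stmt_1 (d : ℕ) (hd : 0 < d) (γ γ' : ℚ)
    (h0 : 0 ≤ γ) (h1 : γ < γ') (h2 : γ' ≤ 1)
    (hγd : γ.den ≤ d) (hγ'd : γ'.den ≤ d)
    (n : ℕ) (hn : 0 < n) (hnd : d * (d - 1) ≤ n) :
    ⌊γ * n⌋ < ⌊γ' * n⌋ := by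
  by_contra hcon
  push_neg at hcon
  set Q := γ.den with hQdef
  set Q' := γ'.den with hQ'def
  set g := Nat.gcd Q Q' with hgdef
  have hQ0 : 0 < Q := γ.pos
  have hQ'0 : 0 < Q' := γ'.pos
  have hg0 : 0 < g := Nat.gcd_pos_of_pos_left _ hQ0
  have hQq : (0:ℚ) < Q := by exact_mod_cast hQ0
  have hQ'q : (0:ℚ) < Q' := by exact_mod_cast hQ'0
  have e1 : γ * (Q:ℚ) = (γ.num : ℚ) := Rat.mul_den_eq_num γ
  have e1' : γ' * (Q':ℚ) = (γ'.num : ℚ) := Rat.mul_den_eq_num γ'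
  -- key fact: γ' - γ ≥ g / (Q Q')
  have hk : (g:ℚ) ≤ (γ' - γ) * (Q * Q') := by
    have heq : (γ' - γ) * ((Q:ℚ) * Q') = ((γ'.num * Q - γ.num * Q' : ℤ) : ℚ) := by
      push_cast
      nlinarith [e1, e1']
    have hdvd : (g:ℤ) ∣ γ'.num * Q - γ.num * Q' := by
      apply dvd_sub
      · exact Dvd.dvd.mul_left (Int.natCast_dvd_natCast.2 (Nat.gcd_dvd_left _ _)) _
      · exact Dvd.dvd.mul_left (Int.natCast_dvd_natCast.2 (Nat.gcd_dvd_right _ _)) _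
    have hpos : (0:ℤ) < γ'.num * Q - γ.num * Q' := by
      have : (0:ℚ) < ((γ'.num * Q - γ.num * Q' : ℤ) : ℚ) := by
        rw [← heq]
        have : (0:ℚ) < γ' - γ := by linarith
        positivity
      exact_mod_cast this
    have := Int.le_of_dvd hpos hdvd
    rw [heq]
    exact_mod_cast this
  -- from the contradiction hypothesis: γ'.num * n ≤ (⌊γn⌋+1) Q' - 1
  have hfl : γ' * n < (⌊γ * n⌋ : ℚ) + 1 := by
    have h := Int.lt_floor_add_one (γ' * n)
    have : ((⌊γ' * n⌋ : ℤ) : ℚ) ≤ ((⌊γ * n⌋ : ℤ) : ℚ) := by exact_mod_cast hcon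
    linarith
  have h2' : γ'.num * (n:ℤ) ≤ (⌊γ * n⌋ + 1) * Q' - 1 := by
    have hq : (γ'.num : ℚ) * n < ((⌊γ * n⌋ : ℚ) + 1) * Q' := by
      calc (γ'.num : ℚ) * n = γ' * n * Q' := by rw [← e1']; ring
        _ < ((⌊γ * n⌋ : ℚ) + 1) * Q' := by
            exact mul_lt_mul_of_pos_right hfl hQ'q
    have : γ'.num * (n:ℤ) < (⌊γ * n⌋ + 1) * Q' := by exact_mod_cast hq
    omega
  have hflo : ((⌊γ * n⌋ : ℤ) : ℚ) ≤ γ * n := Int.floor_le _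
  -- combine in ℚ : g * n + Q ≤ Q * Q'
  have hfinq : (g:ℚ) * n + Q ≤ Q * Q' := by
    have hn0 : (0:ℚ) ≤ n := by positivity
    have t1 : (g:ℚ) * n ≤ (γ' - γ) * (Q * Q') * n :=
      mul_le_mul_of_nonneg_right hk hn0
    have h2q : (γ'.num : ℚ) * n ≤ ((⌊γ * n⌋ : ℚ) + 1) * Q' - 1 := by exact_mod_cast h2'
    have t2 : γ' * n * (Q * Q') ≤ (((⌊γ * n⌋ : ℚ) + 1) * Q' - 1) * Q := by
      have : γ' * n * (Q * Q') = (γ'.num : ℚ) * n * Q := by rw [← e1']; ring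
      rw [this]
      exact mul_le_mul_of_nonneg_right h2q (le_of_lt hQq)
    have t3 : ((⌊γ * n⌋ : ℚ)) * (Q * Q') ≤ γ * n * (Q * Q') :=
      mul_le_mul_of_nonneg_right hflo (by positivity)
    nlinarith [t1, t2, t3]
  have hfin : g * n + Q ≤ Q * Q' := by exact_mod_cast hfinq
  -- now pure arithmetic contradiction
  obtain ⟨e, rfl⟩ : ∃ e, d = e + 1 := ⟨d - 1, by omega⟩
  obtain ⟨q', hq'⟩ : ∃ q'', Q' = q'' + 1 := ⟨Q' - 1, by omega⟩
  have hnd' : (e + 1) * e ≤ n := by simpa using hnd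
  have c1 : g * n ≤ Q * q' := by
    have : Q * Q' = Q * q' + Q := by rw [hq']; ring
    omega
  have hq'le : q' ≤ e := by omega
  have hQle : Q ≤ e + 1 := hγd
  have c2 : Q * q' ≤ (e + 1) * e := Nat.mul_le_mul hQle hq'le
  have hgn : g * n ≤ 1 * n := by
    calc g * n ≤ Q * q' := c1
      _ ≤ (e + 1) * e := c2
      _ ≤ n := hnd'
      _ = 1 * n := (one_mul n).symm
  have hg1 : g ≤ 1 := Nat.le_of_mul_le_mul_right hgn hn
  rcases Nat.eq_zero_or_pos e with he | he
  · have hq0 : q' = 0 := by omega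
    have := Nat.mul_pos hg0 hn
    rw [hq0, Nat.mul_zero] at c1
    omega
  · have heq : Q * q' = (e + 1) * e := le_antisymm c2 (by
      calc (e + 1) * e ≤ n := hnd'
        _ ≤ g * n := Nat.le_mul_of_pos_left _ hg0
        _ ≤ Q * q' := c1)
    have h1' : (e + 1) * e ≤ (e + 1) * q' := by
      calc (e + 1) * e = Q * q' := heq.symm
        _ ≤ (e + 1) * q' := Nat.mul_le_mul_right _ hQle
    have hq'e : q' = e := le_antisymm hq'le (Nat.le_of_mul_le_mul_left h1' (by omega))
    have hQe : Q = e + 1 := by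
      apply Nat.eq_of_mul_eq_mul_right he
      rw [← hq'e] at heq ⊢
      exact heq
    have hge : g = e + 1 := by
      rw [hgdef, hQe, hq', hq'e]
      exact Nat.gcd_self _
    omega
end

section
/- Let n be a positive integer, and let γ, δ, δ' be rational numbers with 0 ≤ γ < 1, 0 ≤ δ < δ' ≤ 1, and either γ ≤ δ or γ ≥ δ'. Let m be an integer with ⌊δ n⌋ < m ≤ ⌊δ' n⌋. Then the fractional part of γ − m/n equals γ − m/n + ι(γ, δ), where ι(γ, δ) = 1 if γ ≤ δ and ι(γ, δ) = 0 if γ > δ. -/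
/-- Let `n` be a positive integer, and let `γ, δ, δ'` be rationals with `0 ≤ γ < 1`,
`0 ≤ δ < δ' ≤ 1`, and either `γ ≤ δ` or `γ ≥ δ'`. Let `m` be an integer with
`⌊δ n⌋ < m ≤ ⌊δ' n⌋`. Then the fractional part of `γ − m/n` equals
`γ − m/n + ι(γ, δ)`, where `ι(γ, δ) = 1` if `γ ≤ δ` and `0` if `γ > δ`. -/
theorem stmt_3 (n : ℕ) (hn : 0 < n) (γ δ δ' : ℚ)
    (hγ0 : 0 ≤ γ) (hγ1 : γ < 1) (hδ0 : 0 ≤ δ) (hδδ' : δ < δ') (hδ'1 : δ' ≤ 1)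
    (hside : γ ≤ δ ∨ δ' ≤ γ)
    (m : ℤ) (hm1 : ⌊δ * n⌋ < m) (hm2 : m ≤ ⌊δ' * n⌋) :
    Int.fract (γ - (m : ℚ) / n) = γ - (m : ℚ) / n + (if γ ≤ δ then 1 else 0) := by
  have hn' : (0:ℚ) < n := by exact_mod_cast hn
  have hmδ' : (m:ℚ) ≤ δ' * n := Int.le_floor.mp hm2
  have hδm : δ * n < (m:ℚ) := Int.floor_lt.mp hm1
  split_ifs with h
  · -- γ ≤ δ, fract = x + 1
    have h1 : γ - (m:ℚ) / n < 0 := by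
      have : γ * n < m := lt_of_le_of_lt (by nlinarith) hδm
      rw [sub_neg, lt_div_iff₀ hn']
      linarith
    have h2 : (-1:ℚ) ≤ γ - (m:ℚ) / n := by
      have hmn : (m:ℚ) ≤ n := le_trans hmδ' (by nlinarith)
      have : (m:ℚ) / n ≤ 1 := by rw [div_le_one hn']; exact hmn
      linarith
    rw [show γ - (m:ℚ) / n = (γ - (m:ℚ)/n + 1) - ((1:ℤ):ℚ) by push_cast; ring,
      Int.fract_sub_intCast, Int.fract_eq_self.2 ⟨by linarith, by linarith⟩]
    push_cast; ring
  · -- δ' ≤ γ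
    have hγδ' : δ' ≤ γ := hside.resolve_left h
    have h1 : 0 ≤ γ - (m:ℚ) / n := by
      have : (m:ℚ) / n ≤ δ' := by rw [div_le_iff₀ hn']; linarith
      linarith
    have h2 : γ - (m:ℚ) / n < 1 := by
      have hm0 : (0:ℤ) ≤ m := by
        have : (0:ℤ) ≤ ⌊δ * n⌋ := Int.floor_nonneg.2 (by positivity)
        linarith
      have : (0:ℚ) ≤ (m:ℚ) / n := by positivity
      linarith
    rw [Int.fract_eq_self.2 ⟨h1, h2⟩]; ring
end

section
/- Let n be a positive integer and let γ, γ_i be rational numbers with 0 ≤ γ < 1 and 0 ≤ γ_i ≤ 1. Set m_i = ⌊γ_i n⌋ and γ_{i,c} = γ_i n − m_i, and assume that if γ < γ_i then γ n < m_i. Then the fractional part of γ − m_i/n equals (γ − m_i/n) + ι(γ, γ_i) − ε(γ, γ_i), where ι(γ, γ_i) = 1 if γ ≤ γ_i and 0 otherwise, and ε(γ, γ_i) = 1 if γ = γ_i and 0 otherwise. Equivalently, {γ − m_i/n} = γ − γ_i + ι(γ, γ_i) − ε(γ, γ_i) + γ_{i,c}/n. -/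
/-- Let `n` be a positive integer and `γ, γᵢ` rationals with `0 ≤ γ < 1` and
`0 ≤ γᵢ ≤ 1`. Set `mᵢ = ⌊γᵢ n⌋` and `γᵢc = γᵢ n − mᵢ`, and assume that if `γ < γᵢ`
then `γ n < mᵢ`. Then `{γ − mᵢ/n} = (γ − mᵢ/n) + ι(γ, γᵢ) − ε(γ, γᵢ)`, where
`ι(γ, γᵢ) = 1` if `γ ≤ γᵢ` and `0` otherwise, and `ε(γ, γᵢ) = 1` if `γ = γᵢ` and `0`
otherwise. Equivalently, `{γ − mᵢ/n} = γ − γᵢ + ι(γ, γᵢ) − ε(γ, γᵢ) + γᵢc/n`. -/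
theorem stmt_4 (n : ℕ) (hn : 0 < n) (γ γi : ℚ)
    (hγ0 : 0 ≤ γ) (hγ1 : γ < 1) (hγi0 : 0 ≤ γi) (hγi1 : γi ≤ 1)
    (mi : ℤ) (hmi : mi = ⌊γi * n⌋)
    (γic : ℚ) (hγic : γic = γi * n - mi)
    (hassume : γ < γi → γ * n < (mi : ℚ)) :
    Int.fract (γ - (mi : ℚ) / n) =
      (γ - (mi : ℚ) / n) + (if γ ≤ γi then 1 else 0) - (if γ = γi then 1 else 0) ∧
    Int.fract (γ - (mi : ℚ) / n) =
      γ - γi + (if γ ≤ γi then 1 else 0) - (if γ = γi then 1 else 0) + γic / n := by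
  have hn0 : (0:ℚ) < (n:ℚ) := by exact_mod_cast hn
  have hmile : (mi:ℚ) ≤ γi * n := by rw [hmi]; exact Int.floor_le _
  have hmin : (mi:ℚ)/n ≤ γi := by
    rw [div_le_iff₀ hn0]; exact hmile
  have hmi0 : (0:ℚ) ≤ (mi:ℚ) := by
    rw [hmi]; exact_mod_cast Int.floor_nonneg.mpr (by positivity)
  have hmi1 : (mi:ℚ)/n ≤ 1 := le_trans hmin hγi1
  have hlt1 : γ - (mi:ℚ)/n < 1 := by
    have : (0:ℚ) ≤ (mi:ℚ)/n := by positivity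
    linarith
  have hfrac : Int.fract (γ - (mi : ℚ) / n) =
      (γ - (mi : ℚ) / n) + (if γ ≤ γi then 1 else 0) - (if γ = γi then 1 else 0) := by
    rcases lt_trichotomy γ γi with h | h | h
    · rw [if_pos h.le, if_neg h.ne]
      have hlt : γ - (mi:ℚ)/n < 0 := by
        have := hassume h
        have : γ < (mi:ℚ)/n := by rw [lt_div_iff₀ hn0]; linarith
        linarith
      have : Int.fract (γ - (mi:ℚ)/n) = (γ - (mi:ℚ)/n) + 1 := by
        have h1 : Int.fract ((γ - (mi:ℚ)/n) + 1) = (γ - (mi:ℚ)/n) + 1 :=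
          Int.fract_eq_self.mpr ⟨by linarith, by linarith⟩
        rw [← h1, Int.fract_add_one]
      linarith [this]
    · rw [if_pos h.le, if_pos h]
      have : Int.fract (γ - (mi:ℚ)/n) = γ - (mi:ℚ)/n :=
        Int.fract_eq_self.mpr ⟨by rw [h]; linarith, hlt1⟩
      linarith
    · rw [if_neg (not_le.mpr h), if_neg (by intro he; exact absurd he.symm h.ne)]
      have : Int.fract (γ - (mi:ℚ)/n) = γ - (mi:ℚ)/n :=
        Int.fract_eq_self.mpr ⟨by linarith, hlt1⟩
      linarith
  have key : γ - (mi:ℚ)/n = γ - γi + γic/n := by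
    rw [hγic]; field_simp; ring
  refine ⟨hfrac, ?_⟩
  rw [hfrac]
  linarith [key]
end

section
/- Let R be a commutative ring, e and n positive integers, σ ∈ R, and let u_1, …, u_n be polynomials over R and c_1, …, c_n ∈ R. For a polynomial f let φ(f) denote the e×e matrix (indexed by 1 ≤ h_1, h_2 ≤ e) whose (h_1,h_2) entry is the coefficient of x^{h_1−h_2} in f if h_2 ≤ h_1 and 0 otherwise. For each k let A(k) be the 2e×2e block matrix [[I_e, 0], [σ·Diag(c_k^{e−1}, c_k^{e−2}, …, c_k, 1), φ(u_k)]], where Diag(c_k^{e−h})_{h=1,…,e} is the diagonal matrix with (h,h) entry c_k^{e−h}. Then the ordered product A(1)···A(n) equals the block matrix [[I_e, 0], [L, φ(u_1···u_n)]], where the (h_1,h_2) entry of L is σ · Σ_{k=1}^{n} c_k^{e−h_2} · (the coefficient of x^{h_1−h_2} in ∏_{j=1}^{k−1} u_j), with the convention that this coefficient is 0 when h_2 > h_1. -/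
section Aux

variable {R : Type*} [CommRing R] {e : ℕ}

private lemma phi_one' (φ : Polynomial R → Matrix (Fin e) (Fin e) R)
    (hφ : ∀ f (h1 h2 : Fin e),
      φ f h1 h2 = if (h2 : ℕ) ≤ (h1 : ℕ) then f.coeff ((h1 : ℕ) - (h2 : ℕ)) else 0) :
    φ 1 = 1 := by
  ext h1 h2
  rw [hφ, Matrix.one_apply]
  by_cases h : h1 = h2
  · subst h; simp
  · rw [if_neg h]
    rcases le_or_gt (h2 : ℕ) (h1 : ℕ) with hle | hlt
    · rw [if_pos hle, Polynomial.coeff_one, if_neg (by rw [Fin.ext_iff] at h; omega)]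
    · rw [if_neg (not_le.2 hlt)]

private lemma phi_mul' (φ : Polynomial R → Matrix (Fin e) (Fin e) R)
    (hφ : ∀ f (h1 h2 : Fin e),
      φ f h1 h2 = if (h2 : ℕ) ≤ (h1 : ℕ) then f.coeff ((h1 : ℕ) - (h2 : ℕ)) else 0)
    (f g : Polynomial R) : φ (f * g) = φ f * φ g := by
  ext h1 h2
  rw [hφ, Matrix.mul_apply]
  simp only [hφ]
  rcases le_or_gt (h2 : ℕ) (h1 : ℕ) with hle | hlt
  · rw [if_pos hle]
    rw [Fin.sum_univ_eq_sum_range (fun m =>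
      (if m ≤ (h1 : ℕ) then f.coeff ((h1 : ℕ) - m) else 0) *
      (if (h2 : ℕ) ≤ m then g.coeff (m - (h2 : ℕ)) else 0))]
    have hsub : Finset.Icc (h2 : ℕ) (h1 : ℕ) ⊆ Finset.range e := by
      intro m hm
      rw [Finset.mem_Icc] at hm
      rw [Finset.mem_range]
      exact lt_of_le_of_lt hm.2 h1.isLt
    rw [← Finset.sum_subset hsub (fun m _ hm => by
      rw [Finset.mem_Icc] at hm
      rcases le_or_gt m (h1 : ℕ) with hj | hj
      · rw [if_neg (show ¬ ((h2 : ℕ) ≤ m) from by omega), mul_zero]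
      · rw [if_neg (not_le.2 hj), zero_mul])]
    rw [← Finset.Ico_add_one_right_eq_Icc, Finset.sum_Ico_eq_sum_range, show (h1 : ℕ) + 1 - (h2 : ℕ) = ((h1:ℕ) - (h2:ℕ)) + 1 from by omega]
    rw [mul_comm f g, Polynomial.coeff_mul, Finset.Nat.sum_antidiagonal_eq_sum_range_succ_mk]
    refine Finset.sum_congr rfl fun i hi => ?_
    rw [Finset.mem_range] at hi
    rw [if_pos (by omega), if_pos (by omega),
      show (h1 : ℕ) - ((h2 : ℕ) + i) = (h1:ℕ) - (h2:ℕ) - i from by omega,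
      show (h2 : ℕ) + i - (h2 : ℕ) = i from by omega, mul_comm]
  · rw [if_neg (not_le.2 hlt)]
    refine (Finset.sum_eq_zero fun j _ => ?_).symm
    rcases le_or_gt ((j : ℕ)) (h1 : ℕ) with hj | hj
    · rw [if_neg (show ¬ ((h2 : ℕ) ≤ (j : ℕ)) from by omega), mul_zero]
    · rw [if_neg (not_le.2 hj), zero_mul]

private lemma prod_aux (φ : Polynomial R → Matrix (Fin e) (Fin e) R)
    (hφ : ∀ f (h1 h2 : Fin e),
      φ f h1 h2 = if (h2 : ℕ) ≤ (h1 : ℕ) then f.coeff ((h1 : ℕ) - (h2 : ℕ)) else 0)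
    (σ : R) :
    ∀ (n : ℕ) (u : Fin n → Polynomial R) (c : Fin n → R),
    (List.ofFn fun k : Fin n =>
      Matrix.fromBlocks (1 : Matrix (Fin e) (Fin e) R) 0
        (σ • Matrix.diagonal fun h : Fin e => c k ^ (e - 1 - (h : ℕ))) (φ (u k))).prod =
    Matrix.fromBlocks 1 0
      (∑ k : Fin n, φ (∏ j ∈ Finset.univ.filter fun j : Fin n => j < k, u j) *
        (σ • Matrix.diagonal fun h : Fin e => c k ^ (e - 1 - (h : ℕ))))
      (φ (∏ k : Fin n, u k)) := by
  intro n
  induction n with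
  | zero =>
    intro u c
    simp [phi_one' φ hφ, Matrix.fromBlocks_one]
  | succ n ih =>
    intro u c
    rw [List.ofFn_succ, List.prod_cons, ih (fun i => u i.succ) (fun i => c i.succ)]
    rw [Matrix.fromBlocks_multiply]
    simp only [one_mul, mul_one, zero_mul, mul_zero, add_zero, zero_add, Matrix.mul_one]
    have hk : ∀ k : Fin n,
        (∏ j ∈ Finset.univ.filter fun j : Fin (n+1) => j < k.succ, u j)
          = u 0 * ∏ j ∈ Finset.univ.filter (fun j : Fin n => j < k), u j.succ := by
      intro k
      rw [Finset.prod_filter, Finset.prod_filter, Fin.prod_univ_succ]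
      simp [Fin.succ_pos, Fin.succ_lt_succ_iff]
    have h3 : (∑ k : Fin (n+1),
        φ (∏ j ∈ Finset.univ.filter fun j : Fin (n+1) => j < k, u j) *
          (σ • Matrix.diagonal fun h : Fin e => c k ^ (e - 1 - (h : ℕ))))
        = (σ • Matrix.diagonal fun h : Fin e => c 0 ^ (e - 1 - (h : ℕ)))
          + φ (u 0) * ∑ k : Fin n,
            φ (∏ j ∈ Finset.univ.filter fun j : Fin n => j < k, u j.succ) *
              (σ • Matrix.diagonal fun h : Fin e => c k.succ ^ (e - 1 - (h : ℕ))) := by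
      rw [Fin.sum_univ_succ]
      congr 1
      · rw [show (Finset.univ.filter fun j : Fin (n+1) => j < 0) = ∅ from by simp,
          Finset.prod_empty, phi_one' φ hφ, one_mul]
      · rw [Finset.mul_sum]
        refine Finset.sum_congr rfl fun k _ => ?_
        rw [hk k, phi_mul' φ hφ, mul_assoc]
    rw [h3, ← phi_mul' φ hφ, ← Fin.prod_univ_succ]

end Aux

/-- Let `R` be a commutative ring, `e, n > 0`, `σ ∈ R`, `u_k` polynomials and `c_k ∈ R`.
With `φ f` the `e×e` lower-triangular matrix with `(h₁,h₂)` entry the coefficient of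
`x^(h₁−h₂)` in `f` (and `0` when `h₂ > h₁`), the ordered product of the block matrices
`A k = [[1, 0], [σ·Diag(c_k^(e−h))_h, φ (u k)]]` equals `[[1, 0], [L, φ (∏ u k)]]`,
where `L h₁ h₂ = σ · Σ_k c_k^(e−h₂) · (coefficient of x^(h₁−h₂) in ∏_{j<k} u j)`
(with the convention that this coefficient is `0` when `h₂ > h₁`). -/
theorem stmt_10 (R : Type*) [CommRing R] (e n : ℕ) (he : 0 < e) (hn : 0 < n)
    (σ : R) (u : Fin n → Polynomial R) (c : Fin n → R)
    (φ : Polynomial R → Matrix (Fin e) (Fin e) R)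
    (hφ : ∀ f (h1 h2 : Fin e),
      φ f h1 h2 = if (h2 : ℕ) ≤ (h1 : ℕ) then f.coeff ((h1 : ℕ) - (h2 : ℕ)) else 0)
    (L : Matrix (Fin e) (Fin e) R)
    (hL : ∀ h1 h2 : Fin e,
      L h1 h2 = σ * ∑ k : Fin n, c k ^ (e - 1 - (h2 : ℕ)) *
        (if (h2 : ℕ) ≤ (h1 : ℕ) then
          (∏ j ∈ Finset.univ.filter fun j : Fin n => j < k, u j).coeff ((h1 : ℕ) - (h2 : ℕ))
        else 0)) :
    (List.ofFn fun k : Fin n =>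
      Matrix.fromBlocks (1 : Matrix (Fin e) (Fin e) R) 0
        (σ • Matrix.diagonal fun h : Fin e => c k ^ (e - 1 - (h : ℕ))) (φ (u k))).prod =
    Matrix.fromBlocks (1 : Matrix (Fin e) (Fin e) R) 0 L (φ (∏ k : Fin n, u k)) := by
  have hLS : L = ∑ k : Fin n, φ (∏ j ∈ Finset.univ.filter fun j : Fin n => j < k, u j) *
      (σ • Matrix.diagonal fun h : Fin e => c k ^ (e - 1 - (h : ℕ))) := by
    ext h1 h2
    rw [hL]
    simp only [Matrix.sum_apply, Matrix.mul_smul, Matrix.smul_apply, Matrix.mul_diagonal,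
      hφ, smul_eq_mul, Finset.mul_sum]
    exact Finset.sum_congr rfl fun k _ => by ring
  rw [hLS]
  exact prod_aux φ hφ σ n u c
end

section
/- Let j and k be positive integers, and define f̃(i) for 1 ≤ i ≤ k by f̃(i) = (i/p)^j if i = p^a is a power of a prime p with a ≥ 1, and f̃(i) = i^j otherwise. Set N = ∏_{i=1}^{k} f̃(i). Then in the ring ℤ[x]/(x^2), the product ∏_{i=1}^{k} (i^j + x) is divisible by N; equivalently, N divides (k!)^j and N divides the integer Σ_{i=1}^{k} (k!)^j / i^j. -/
/-- Let `j, k` be positive integers and define `ft i = (i/p)^j` when `i = p^a` is a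
prime power (`a ≥ 1`) and `ft i = i^j` otherwise. Let `N = ∏_{i=1}^{k} ft i`. Then
in `ℤ[x]/(x²)` the product `∏_{i=1}^{k} (i^j + x)` is divisible by `N`; equivalently,
`N` divides `(k!)^j` and `N` divides `Σ_{i=1}^{k} (k!)^j / i^j`. -/
theorem stmt_16 (j k : ℕ) (hj : 0 < j) (hk : 0 < k)
    (ft : ℕ → ℕ)
    (hft1 : ∀ p a : ℕ, p.Prime → 1 ≤ a → ft (p ^ a) = (p ^ a / p) ^ j)
    (hft2 : ∀ i : ℕ, ¬ IsPrimePow i → ft i = i ^ j)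
    (N : ℕ) (hN : N = ∏ i ∈ Finset.Icc 1 k, ft i) :
    (N : ℤ) ∣ (k.factorial : ℤ) ^ j ∧
    (N : ℤ) ∣ ∑ i ∈ Finset.Icc 1 k, (k.factorial : ℤ) ^ j / (i : ℤ) ^ j := by
  classical
  set c : ℕ → ℕ := fun m => if IsPrimePow m then m.minFac else 1 with hc
  have hc_pos : ∀ m, 0 < c m := by
    intro m
    by_cases h : IsPrimePow m <;> simp [hc, h, Nat.minFac_pos]
  -- key pointwise identity
  have hA : ∀ m ∈ Finset.Icc 1 k, ft m * (c m) ^ j = m ^ j := by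
    intro m hm
    by_cases h : IsPrimePow m
    · obtain ⟨p, a, hp, ha, rfl⟩ := h
      have hp' : p.Prime := hp.nat_prime
      have h' : IsPrimePow (p ^ a) := ⟨p, a, hp, ha, rfl⟩
      have hmin : (p ^ a).minFac = p := Nat.Prime.pow_minFac hp' (by omega)
      have hdiv : p ^ a / p = p ^ (a - 1) := by
        conv_lhs => rw [show a = (a - 1) + 1 by omega, pow_succ]
        exact Nat.mul_div_cancel _ hp'.pos
      rw [hft1 p a hp' (by omega), hc]
      simp only [if_pos h', hmin, hdiv, ← mul_pow]
      rw [← pow_succ, show a - 1 + 1 = a by omega]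
    · rw [hft2 m h, hc]
      simp [h]
  have hfact : ∀ n : ℕ, ∏ x ∈ Finset.Icc 1 n, x = n.factorial := by
    intro n
    induction n with
    | zero => simp
    | succ n ih => rw [Finset.prod_Icc_succ_top (by omega), ih, Nat.factorial_succ, mul_comm]
  have hprod : N * (∏ m ∈ Finset.Icc 1 k, c m) ^ j = k.factorial ^ j := by
    rw [hN, ← Finset.prod_pow, ← Finset.prod_mul_distrib,
      Finset.prod_congr rfl hA, Finset.prod_pow, hfact]
  -- every `i ≤ k` divides `∏ c`
  have hB : ∀ i ∈ Finset.Icc 1 k, i ∣ ∏ m ∈ Finset.Icc 1 k, c m := by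
    intro i hi
    obtain ⟨hi1, hik⟩ := Finset.mem_Icc.mp hi
    have hPne : (∏ m ∈ Finset.Icc 1 k, c m) ≠ 0 :=
      (Finset.prod_pos fun m _ => hc_pos m).ne'
    rw [← Nat.factorization_le_iff_dvd (by omega) hPne, Finsupp.le_def]
    intro p
    rcases Nat.eq_zero_or_pos (i.factorization p) with he | he
    · simp [he]
    set e := i.factorization p with hedef
    have hp : p.Prime := by
      have : p ∈ i.factorization.support := Finsupp.mem_support_iff.mpr (by omega)
      exact Nat.prime_of_mem_primeFactors (by rwa [Nat.support_factorization] at this)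
    have hpe : p ^ e ∣ i := Nat.ordProj_dvd i p
    have hpek : p ^ e ≤ k := le_trans (Nat.le_of_dvd (by omega) hpe) hik
    rw [Nat.factorization_prod fun m _ => (hc_pos m).ne', Finset.sum_apply']
    set S : Finset ℕ := (Finset.Icc 1 e).image (p ^ ·) with hS
    have hsub : S ⊆ Finset.Icc 1 k := by
      intro x hx
      obtain ⟨a, ha, rfl⟩ := Finset.mem_image.mp hx
      obtain ⟨ha1, hae⟩ := Finset.mem_Icc.mp ha
      refine Finset.mem_Icc.mpr ⟨Nat.one_le_pow _ _ hp.pos, ?_⟩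
      exact le_trans (Nat.pow_le_pow_right hp.pos hae) hpek
    have hsum_S : ∑ m ∈ S, (c m).factorization p = e := by
      rw [hS, Finset.sum_image (fun a _ b _ h => Nat.pow_right_injective hp.two_le h)]
      have : ∀ a ∈ Finset.Icc 1 e, (c (p ^ a)).factorization p = 1 := by
        intro a ha
        obtain ⟨ha1, _⟩ := Finset.mem_Icc.mp ha
        have h' : IsPrimePow (p ^ a) := ⟨p, a, hp.prime, by omega, rfl⟩
        have hmin : (p ^ a).minFac = p := Nat.Prime.pow_minFac hp (by omega)
        simp [hc, if_pos h', hmin, hp.factorization_self]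
      rw [Finset.sum_congr rfl this]
      simp [Nat.card_Icc]
    calc e = ∑ m ∈ S, (c m).factorization p := hsum_S.symm
      _ ≤ ∑ m ∈ Finset.Icc 1 k, (c m).factorization p :=
        Finset.sum_le_sum_of_subset hsub
  -- assemble
  have hterm : ∀ i ∈ Finset.Icc 1 k, ∃ t : ℕ, k.factorial ^ j = N * (i ^ j * t) := by
    intro i hi
    obtain ⟨s, hs⟩ := hB i hi
    exact ⟨s ^ j, by rw [← hprod, hs, mul_pow]⟩
  constructor
  · exact_mod_cast Int.natCast_dvd_natCast.mpr ⟨_, hprod.symm⟩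
  · refine Finset.dvd_sum fun i hi => ?_
    obtain ⟨hi1, _⟩ := Finset.mem_Icc.mp hi
    obtain ⟨t, ht⟩ := hterm i hi
    have hz : ((k.factorial : ℤ)) ^ j = (i : ℤ) ^ j * ((N : ℤ) * (t : ℤ)) := by
      have := congrArg (Nat.cast : ℕ → ℤ) ht
      push_cast at this
      rw [this]; ring
    have hine : ((i : ℤ)) ^ j ≠ 0 := pow_ne_zero _ (by exact_mod_cast (by omega : i ≠ 0))
    rw [hz, Int.mul_ediv_cancel_left _ hine]
    exact Dvd.intro _ rfl
end
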